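/- arXiv:2110.15450 — 3 statements merged into one kernel-verified Lean document; each statement's English description precedes it below -/
import Mathlib

section
/- Generalized Bochner formula in Euclidean space: Let d ≥ 1, E = EuclideanSpace ℝ (Fin d), let u : E → ℝ be three times continuously differentiable on a neighborhood of x ∈ E, and let h : ℝ → ℝ be twice continuously differentiable on a neighborhood of w(x), where w := (1/2)‖∇u‖². Then Δ(h ∘ w)(x) = h'(w(x))·(⟨∇(Δu)(x), ∇u(x)⟩ + ‖D²u(x)‖²) + h''(w(x))·‖D²u(x)(∇u(x))‖², where ‖D²u(x)‖ is the Frobenius norm of the Hessian. -/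
open scoped RealInnerProductSpace Topology

section aux
variable {F : Type*} [NormedAddCommGroup F] [InnerProductSpace ℝ F] [CompleteSpace F]

lemma inner_gradient_apply (f : F → ℝ) (y v : F) : ⟪gradient f y, v⟫ = fderiv ℝ f y v :=
  InnerProductSpace.toDual_symm_apply

lemma gradient_eq_of {f : F → ℝ} {y B : F} (hB : ∀ v, fderiv ℝ f y v = ⟪B, v⟫) :
    gradient f y = B :=
  ext_inner_right ℝ fun v => by rw [inner_gradient_apply, hB]

noncomputable def toDualSymmCLM (F : Type*) [NormedAddCommGroup F] [InnerProductSpace ℝ F]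
    [CompleteSpace F] : StrongDual ℝ F →L[ℝ] F where
  toFun := fun ξ => (InnerProductSpace.toDual ℝ F).symm ξ
  map_add' := fun ξ η => by simp
  map_smul' := fun c ξ => ext_inner_right ℝ fun v => by
    simp [InnerProductSpace.toDual_symm_apply, real_inner_smul_left]
  cont := (InnerProductSpace.toDual ℝ F).symm.continuous

lemma gradient_eq_clm_comp (f : F → ℝ) :
    gradient f = fun y => toDualSymmCLM F (fderiv ℝ f y) := rfl

lemma contDiffAt_gradient {n m : WithTop ℕ∞} {f : F → ℝ} {y : F} (hf : ContDiffAt ℝ n f y)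
    (hn : m + 1 ≤ n) : ContDiffAt ℝ m (gradient f) y := by
  rw [gradient_eq_clm_comp]
  exact ((toDualSymmCLM F).contDiff).comp_contDiffAt y (hf.fderiv_right hn)

lemma fderiv_gradient_inner {f : F → ℝ} {y : F} (hf : ContDiffAt ℝ 2 f y) (a b : F) :
    ⟪fderiv ℝ (gradient f) y a, b⟫ = fderiv ℝ (fderiv ℝ f) y a b := by
  have hg : DifferentiableAt ℝ (gradient f) y :=
    (contDiffAt_gradient (m := 1) hf (by norm_num)).differentiableAt (by norm_num)
  have hD2 : HasFDerivAt (fderiv ℝ f) (fderiv ℝ (fderiv ℝ f) y) y :=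
    ((hf.fderiv_right (m := 1) (by norm_num)).differentiableAt (by norm_num)).hasFDerivAt
  have h1 : HasFDerivAt (fun z => ⟪b, gradient f z⟫)
      ((innerSL ℝ b).comp (fderiv ℝ (gradient f) y)) y :=
    (innerSL ℝ b).hasFDerivAt.comp y hg.hasFDerivAt
  have h2 : (fun z => ⟪b, gradient f z⟫) = fun z => fderiv ℝ f z b :=
    funext fun z => by rw [real_inner_comm, inner_gradient_apply]
  have h3 : HasFDerivAt (fun z => fderiv ℝ f z b)
      ((ContinuousLinearMap.apply ℝ ℝ b).comp (fderiv ℝ (fderiv ℝ f) y)) y :=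
    (ContinuousLinearMap.apply ℝ ℝ b).hasFDerivAt.comp y hD2
  have h4 := h1.unique (h2 ▸ h3)
  have h5 := congrFun (congrArg (fun (L : F →L[ℝ] ℝ) => (L : F → ℝ)) h4) a
  simpa [real_inner_comm] using h5

lemma hess_symm {f : F → ℝ} {y : F} (hf : ContDiffAt ℝ 2 f y) (a b : F) :
    ⟪fderiv ℝ (gradient f) y a, b⟫ = ⟪fderiv ℝ (gradient f) y b, a⟫ := by
  rw [fderiv_gradient_inner hf, fderiv_gradient_inner hf]
  exact (hf.isSymmSndFDerivAt (by simp [minSmoothness_of_isRCLikeNormedField])) a b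

end aux

/-- The Laplacian of `u : EuclideanSpace ℝ (Fin d) → ℝ` at a point, defined as the trace of the
Hessian (the Fréchet derivative of the gradient) with respect to the standard orthonormal
basis. -/
noncomputable def lap {d : ℕ} (u : EuclideanSpace ℝ (Fin d) → ℝ)
    (x : EuclideanSpace ℝ (Fin d)) : ℝ :=
  ∑ i, ⟪fderiv ℝ (gradient u) x (EuclideanSpace.single i 1), EuclideanSpace.single i 1⟫

/-- The square of the Frobenius norm of the Hessian of `u` at `x`:
`‖D²u(x)‖² = Σᵢ ‖D²u(x) eᵢ‖²`. -/
noncomputable def hessFrobSq {d : ℕ} (u : EuclideanSpace ℝ (Fin d) → ℝ)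
    (x : EuclideanSpace ℝ (Fin d)) : ℝ :=
  ∑ i, ‖fderiv ℝ (gradient u) x (EuclideanSpace.single i 1)‖ ^ 2

set_option maxHeartbeats 2000000 in
/-- **Generalized Bochner formula in Euclidean space.** If `u` is `C³` near `x`,
`w := (1/2)‖∇u‖²`, and `h : ℝ → ℝ` is `C²` near `w x`, then
`Δ(h ∘ w)(x) = h'(w(x))·(⟨∇(Δu)(x), ∇u(x)⟩ + ‖D²u(x)‖²) + h''(w(x))·‖D²u(x)(∇u(x))‖²`. -/
theorem generalized_bochner_formula_euclidean {d : ℕ} (hd : 1 ≤ d)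
    (u : EuclideanSpace ℝ (Fin d) → ℝ) (x : EuclideanSpace ℝ (Fin d))
    (hu : ContDiffAt ℝ 3 u x)
    (w : EuclideanSpace ℝ (Fin d) → ℝ) (hw : w = fun y => (1 / 2 : ℝ) * ‖gradient u y‖ ^ 2)
    (h : ℝ → ℝ) (hh : ContDiffAt ℝ 2 h (w x)) :
    lap (h ∘ w) x =
      deriv h (w x) * (⟪gradient (lap u) x, gradient u x⟫ + hessFrobSq u x)
        + deriv (deriv h) (w x) * ‖fderiv ℝ (gradient u) x (gradient u x)‖ ^ 2 := by
  classical
  have h23 : ((2 : WithTop ℕ∞) ≤ 3) := by norm_num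
  have hu2 : ContDiffAt ℝ 2 u x := hu.of_le h23
  have hg2 : ContDiffAt ℝ 2 (gradient u) x := contDiffAt_gradient hu (by norm_num)
  have hwcd : ∀ y, ContDiffAt ℝ 3 u y → ContDiffAt ℝ 2 w y := by
    intro y hy; rw [hw]
    exact contDiffAt_const.mul ((contDiffAt_gradient (m:=2) hy (by norm_num)).norm_sq ℝ)
  have hw2 : ContDiffAt ℝ 2 w x := hwcd x hu
  have hu_ev : ∀ᶠ y in 𝓝 x, ContDiffAt ℝ 3 u y := hu.eventually (by simp)
  have hh_ev : ∀ᶠ y in 𝓝 x, ContDiffAt ℝ 2 h (w y) :=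
    hw2.continuousAt.eventually (hh.eventually (by simp))
  -- F1 : gradient of w
  have F1 : ∀ᶠ y in 𝓝 x, gradient w y = fderiv ℝ (gradient u) y (gradient u y) := by
    filter_upwards [hu_ev] with y hy
    have hy2 : ContDiffAt ℝ 2 u y := hy.of_le h23
    have hgd : HasFDerivAt (gradient u) (fderiv ℝ (gradient u) y) y :=
      ((contDiffAt_gradient hy (show (2:WithTop ℕ∞)+1 ≤ 3 by norm_num)).differentiableAt
        (by norm_num)).hasFDerivAt
    have hin : HasFDerivAt (fun z => ⟪gradient u z, gradient u z⟫)
        ((fderivInnerCLM ℝ (gradient u y, gradient u y)).comp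
          ((fderiv ℝ (gradient u) y).prod (fderiv ℝ (gradient u) y))) y := hgd.inner ℝ hgd
    have hwy : HasFDerivAt w ((1/2 : ℝ) • ((fderivInnerCLM ℝ (gradient u y, gradient u y)).comp
          ((fderiv ℝ (gradient u) y).prod (fderiv ℝ (gradient u) y)))) y := by
      rw [hw]
      have heq : (fun z => (1/2 : ℝ) * ‖gradient u z‖^2)
          = fun z => (1/2 : ℝ) * ⟪gradient u z, gradient u z⟫ :=
        funext fun z => by rw [real_inner_self_eq_norm_sq]
      rw [heq]
      simpa [smul_eq_mul] using hin.const_mul (1/2 : ℝ)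
    apply gradient_eq_of
    intro v
    rw [hwy.fderiv]
    have hsym := hess_symm hy2 v (gradient u y)
    simp only [ContinuousLinearMap.coe_smul', Pi.smul_apply, ContinuousLinearMap.coe_comp',
      Function.comp_apply, ContinuousLinearMap.prod_apply, fderivInnerCLM_apply, smul_eq_mul]
    have hcomm := real_inner_comm (gradient u y) ((fderiv ℝ (gradient u) y) v)
    linarith [hsym, hcomm]
  -- F3: gradient of h ∘ w
  have F3 : ∀ᶠ y in 𝓝 x, gradient (h ∘ w) y
      = deriv h (w y) • fderiv ℝ (gradient u) y (gradient u y) := by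
    filter_upwards [hu_ev, hh_ev, F1] with y hy hhy hF1
    have hw2y : ContDiffAt ℝ 2 w y := hwcd y hy
    have hwd : HasFDerivAt w (fderiv ℝ w y) y :=
      (hw2y.differentiableAt (by norm_num)).hasFDerivAt
    have hhd : HasDerivAt h (deriv h (w y)) (w y) :=
      (hhy.differentiableAt (by norm_num)).hasDerivAt
    have hcomp : HasFDerivAt (h ∘ w) (deriv h (w y) • fderiv ℝ w y) y :=
      hhd.comp_hasFDerivAt y hwd
    rw [← hF1]
    apply gradient_eq_of
    intro v
    rw [hcomp.fderiv]
    simp only [ContinuousLinearMap.smul_apply, real_inner_smul_left, inner_gradient_apply,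
      smul_eq_mul]
  -- derivative data at x
  have hDg : HasFDerivAt (gradient u) (fderiv ℝ (gradient u) x) x :=
    (hg2.differentiableAt (by norm_num)).hasFDerivAt
  have hD2 : HasFDerivAt (fderiv ℝ (gradient u)) (fderiv ℝ (fderiv ℝ (gradient u)) x) x :=
    ((hg2.fderiv_right (m := 1) (by norm_num)).differentiableAt (by norm_num)).hasFDerivAt
  have hb : HasFDerivAt (fun y => fderiv ℝ (gradient u) y (gradient u y))
      ((fderiv ℝ (gradient u) x).comp (fderiv ℝ (gradient u) x)
        + (fderiv ℝ (fderiv ℝ (gradient u)) x).flip (gradient u x)) x := hD2.clm_apply hDg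
  have hwd : HasFDerivAt w (fderiv ℝ w x) x := (hw2.differentiableAt (by norm_num)).hasFDerivAt
  have hderiv1 : ContDiffAt ℝ 1 (deriv h) (w x) := by
    have hde : deriv h = fun z => (ContinuousLinearMap.apply ℝ ℝ 1) (fderiv ℝ h z) := by
      funext z; simp [ContinuousLinearMap.apply_apply, fderiv_apply_one_eq_deriv]
    rw [hde]
    exact (ContinuousLinearMap.apply ℝ ℝ 1).contDiff.comp_contDiffAt _
      (hh.fderiv_right (m := 1) (by norm_num))
  have hhd2 : HasDerivAt (deriv h) (deriv (deriv h) (w x)) (w x) :=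
    (hderiv1.differentiableAt (by norm_num)).hasDerivAt
  have ha : HasFDerivAt (fun y => deriv h (w y)) (deriv (deriv h) (w x) • fderiv ℝ w x) x :=
    hhd2.comp_hasFDerivAt x hwd
  have hPhi : HasFDerivAt (fun y => deriv h (w y) • fderiv ℝ (gradient u) y (gradient u y))
      (deriv h (w x) • ((fderiv ℝ (gradient u) x).comp (fderiv ℝ (gradient u) x)
          + (fderiv ℝ (fderiv ℝ (gradient u)) x).flip (gradient u x))
        + (deriv (deriv h) (w x) • fderiv ℝ w x).smulRight
            (fderiv ℝ (gradient u) x (gradient u x))) x := ha.smul hb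
  have key : fderiv ℝ (gradient (h ∘ w)) x
      = deriv h (w x) • ((fderiv ℝ (gradient u) x).comp (fderiv ℝ (gradient u) x)
          + (fderiv ℝ (fderiv ℝ (gradient u)) x).flip (gradient u x))
        + (deriv (deriv h) (w x) • fderiv ℝ w x).smulRight
            (fderiv ℝ (gradient u) x (gradient u x)) := by
    rw [Filter.EventuallyEq.fderiv_eq F3, hPhi.fderiv]
  have hBw : gradient w x = fderiv ℝ (gradient u) x (gradient u x) := F1.self_of_nhds
  have hfw : ∀ v, fderiv ℝ w x v = ⟪fderiv ℝ (gradient u) x (gradient u x), v⟫ := by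
    intro v; rw [← inner_gradient_apply w x v, hBw]
  set e : Fin d → EuclideanSpace ℝ (Fin d) := fun i => EuclideanSpace.single i 1 with he
  set B := fderiv ℝ (gradient u) x (gradient u x) with hB
  have P1 : ∀ i : Fin d, ⟪fderiv ℝ (gradient u) x (fderiv ℝ (gradient u) x (e i)), e i⟫
      = ‖fderiv ℝ (gradient u) x (e i)‖ ^ 2 := fun i => by
    rw [hess_symm hu2, real_inner_self_eq_norm_sq]
  have hterm : ∀ i : Fin d, ⟪fderiv ℝ (gradient (h ∘ w)) x (e i), e i⟫
      = deriv h (w x) * (⟪(fderiv ℝ (fderiv ℝ (gradient u)) x (e i)) (gradient u x), e i⟫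
          + ‖fderiv ℝ (gradient u) x (e i)‖ ^ 2)
        + deriv (deriv h) (w x) * (⟪B, e i⟫ * ⟪B, e i⟫) := by
    intro i
    rw [key, ← P1 i]
    simp only [ContinuousLinearMap.add_apply, ContinuousLinearMap.smul_apply,
      ContinuousLinearMap.coe_comp', Function.comp_apply, ContinuousLinearMap.flip_apply,
      ContinuousLinearMap.smulRight_apply, inner_add_left, real_inner_smul_left, hfw, ← hB, smul_eq_mul]
    ring
  have hsymD2 := hg2.isSymmSndFDerivAt (by simp [minSmoothness_of_isRCLikeNormedField])
  have P2 : ∑ i : Fin d, ⟪(fderiv ℝ (fderiv ℝ (gradient u)) x (e i)) (gradient u x), e i⟫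
      = ⟪gradient (lap u) x, gradient u x⟫ := by
    have hlapfun : lap u = fun y => ∑ i : Fin d,
        ((innerSL ℝ (e i)).comp
          (ContinuousLinearMap.apply ℝ (EuclideanSpace ℝ (Fin d)) (e i)))
          (fderiv ℝ (gradient u) y) := by
      funext y
      unfold lap
      exact Finset.sum_congr rfl fun i _ => by
        simp [he, real_inner_comm]
    have hlapD : HasFDerivAt (lap u)
        (∑ i : Fin d, (((innerSL ℝ (e i)).comp
            (ContinuousLinearMap.apply ℝ (EuclideanSpace ℝ (Fin d)) (e i))).comp
            (fderiv ℝ (fderiv ℝ (gradient u)) x))) x := by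
      rw [hlapfun]
      exact HasFDerivAt.fun_sum fun i _ =>
        (((innerSL ℝ (e i)).comp
          (ContinuousLinearMap.apply ℝ (EuclideanSpace ℝ (Fin d)) (e i))).hasFDerivAt).comp x hD2
    have hig : ⟪gradient (lap u) x, gradient u x⟫ = fderiv ℝ (lap u) x (gradient u x) :=
      inner_gradient_apply _ _ _
    rw [hig, hlapD.fderiv]
    simp only [ContinuousLinearMap.coe_sum', Finset.sum_apply, ContinuousLinearMap.coe_comp',
      Function.comp_apply, ContinuousLinearMap.apply_apply, innerSL_apply_apply]
    refine Finset.sum_congr rfl fun i _ => ?_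
    rw [hsymD2 (e i) (gradient u x), real_inner_comm]
  have P3 : ∑ i : Fin d, ⟪B, e i⟫ * ⟪B, e i⟫ = ‖B‖ ^ 2 := by
    have h1 : ∀ i, ⟪B, e i⟫ = B i := fun i => by
      simp [he, EuclideanSpace.inner_single_right]
    have h2 : ‖B‖ ^ 2 = ∑ i, ‖B i‖ ^ 2 := by
      rw [EuclideanSpace.norm_eq, Real.sq_sqrt (by positivity)]
    rw [h2]
    refine Finset.sum_congr rfl fun i _ => ?_
    rw [h1, Real.norm_eq_abs, sq_abs]
    ring
  have hlapdef : lap (h ∘ w) x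
      = ∑ i : Fin d, ⟪fderiv ℝ (gradient (h ∘ w)) x (e i), e i⟫ := by
    rw [he]; rfl
  have hfrob : hessFrobSq u x = ∑ i : Fin d, ‖fderiv ℝ (gradient u) x (e i)‖ ^ 2 := by
    rw [he]; rfl
  rw [hlapdef]
  simp only [hterm]
  rw [Finset.sum_add_distrib, ← Finset.mul_sum, ← Finset.mul_sum, Finset.sum_add_distrib,
    P2, P3, hfrob]
end

section
/- Curvature–dimension inequality in Euclidean space: Let d ≥ 1, E = EuclideanSpace ℝ (Fin d), and let u : E → ℝ be three times continuously differentiable on a neighborhood of x ∈ E. Set w := (1/2)‖∇u‖². Then Δw(x) − ⟨∇(Δu)(x), ∇u(x)⟩ ≥ (1/d)·(Δu(x))². -/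
open scoped RealInnerProductSpace
open InnerProductSpace

section AuxCD

variable {d : ℕ}
local notation "E" => EuclideanSpace ℝ (Fin d)

/-- `toDual.symm` as a continuous linear equivalence. -/
noncomputable def dualIsoCD (d : ℕ) :
    StrongDual ℝ (EuclideanSpace ℝ (Fin d)) ≃L[ℝ] EuclideanSpace ℝ (Fin d) :=
  (InnerProductSpace.toDual ℝ (EuclideanSpace ℝ (Fin d))).symm.toContinuousLinearEquiv

lemma inner_gradient_cd (f : E → ℝ) (y v : E) : ⟪gradient f y, v⟫ = fderiv ℝ f y v :=
  InnerProductSpace.toDual_symm_apply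

lemma grad_hasFDerivAt_cd {f : E → ℝ} {y : E}
    (hf : DifferentiableAt ℝ (fderiv ℝ f) y) :
    HasFDerivAt (gradient f)
      (((dualIsoCD d).toContinuousLinearMap).comp (fderiv ℝ (fderiv ℝ f) y)) y :=
  ((dualIsoCD d).toContinuousLinearMap).hasFDerivAt.comp y hf.hasFDerivAt

/-- The gradient of a `C²` function is `C¹` (here: `Cⁿ⁻¹` for our needs). -/
lemma gradient_contDiffAt_cd {f : E → ℝ} {y : E} (hf : ContDiffAt ℝ 3 f y) :
    ContDiffAt ℝ 2 (gradient f) y := by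
  have h1 : ContDiffAt ℝ 2 (fderiv ℝ f) y := hf.fderiv_right (by norm_num)
  exact ((dualIsoCD d).contDiff.contDiffAt).comp y h1

/-- Symmetry of the Hessian, phrased via the derivative of the gradient. -/
lemma hessian_symm_cd {f : E → ℝ} {y : E} (hf : ContDiffAt ℝ 2 f y) (a b : E) :
    ⟪fderiv ℝ (gradient f) y a, b⟫ = ⟪fderiv ℝ (gradient f) y b, a⟫ := by
  have hdd : DifferentiableAt ℝ (fderiv ℝ f) y :=
    (hf.fderiv_right (by norm_num : (1 : WithTop ℕ∞) + 1 ≤ 2)).differentiableAt (by norm_num)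
  set f'' := fderiv ℝ (fderiv ℝ f) y with hf''
  have hgd := grad_hasFDerivAt_cd hdd
  have hfe : fderiv ℝ (gradient f) y =
      ((dualIsoCD d).toContinuousLinearMap).comp f'' := hgd.fderiv
  have hev : ∀ᶠ z in nhds y, HasFDerivAt f (fderiv ℝ f z) z := by
    filter_upwards [hf.eventually (by norm_num)] with z hz using
      (hz.differentiableAt (by norm_num)).hasFDerivAt
  have hsymm : ∀ v w : E, f'' v w = f'' w v :=
    second_derivative_symmetric_of_eventually hev hdd.hasFDerivAt
  have key : ∀ v w : E, ⟪fderiv ℝ (gradient f) y v, w⟫ = f'' v w := by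
    intro v w
    rw [hfe]
    exact InnerProductSpace.toDual_symm_apply
  rw [key, key, hsymm]

end AuxCD

/-- **Curvature–dimension inequality in Euclidean space.** If `u` is `C³` near `x` and
`w := (1/2)‖∇u‖²`, then `Δw(x) − ⟨∇(Δu)(x), ∇u(x)⟩ ≥ (1/d)·(Δu(x))²`. -/
theorem curvature_dimension_euclidean {d : ℕ} (hd : 1 ≤ d)
    (u : EuclideanSpace ℝ (Fin d) → ℝ) (x : EuclideanSpace ℝ (Fin d))
    (hu : ContDiffAt ℝ 3 u x) :
    (1 / (d : ℝ)) * (lap u x) ^ 2 ≤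
      lap (fun y => (1 / 2 : ℝ) * ‖gradient u y‖ ^ 2) x
        - ⟪gradient (lap u) x, gradient u x⟫ := by
  classical
  set g : EuclideanSpace ℝ (Fin d) → EuclideanSpace ℝ (Fin d) := gradient u with hgdef
  set w : EuclideanSpace ℝ (Fin d) → ℝ := fun y => (1 / 2 : ℝ) * ‖gradient u y‖ ^ 2 with hwdef
  set e : Fin d → EuclideanSpace ℝ (Fin d) := fun i => EuclideanSpace.single i 1 with hedef
  -- smoothness of the gradient
  have hg : ContDiffAt ℝ 2 g x := gradient_contDiffAt_cd hu
  set A : EuclideanSpace ℝ (Fin d) → (EuclideanSpace ℝ (Fin d) →L[ℝ] EuclideanSpace ℝ (Fin d)) := fun y => fderiv ℝ g y with hAdef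
  have hA : ContDiffAt ℝ 1 A x := hg.fderiv_right (by norm_num)
  set B : EuclideanSpace ℝ (Fin d) →L[ℝ] EuclideanSpace ℝ (Fin d) →L[ℝ] EuclideanSpace ℝ (Fin d) := fderiv ℝ A x with hBdef
  have hB : HasFDerivAt A B x := (hA.differentiableAt (by norm_num)).hasFDerivAt
  have hgdiff : ∀ᶠ y in nhds x, HasFDerivAt g (A y) y := by
    filter_upwards [hg.eventually (by norm_num)] with y hy using
      (hy.differentiableAt (by norm_num)).hasFDerivAt
  have hBsymm : ∀ v z, B v z = B z v :=
    second_derivative_symmetric_of_eventually hgdiff hB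
  -- eventual symmetry of the Hessian
  have hsymm_ev : ∀ᶠ y in nhds x, ∀ a b, ⟪A y a, b⟫ = ⟪A y b, a⟫ := by
    filter_upwards [hu.eventually (by norm_num)] with y hy a b using
      hessian_symm_cd (hy.of_le (by norm_num)) a b
  have hAx_symm : ∀ a b, ⟪A x a, b⟫ = ⟪A x b, a⟫ := hsymm_ev.self_of_nhds
  -- the gradient of w near x
  have hwy : ∀ᶠ y in nhds x, gradient w y = A y (g y) := by
    filter_upwards [hgdiff, hsymm_ev] with y hgd hsy
    have h1 : HasFDerivAt (fun t => ⟪g t, g t⟫)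
        ((fderivInnerCLM ℝ (g y, g y)).comp ((A y).prod (A y))) y := hgd.inner ℝ hgd
    have h2 : HasFDerivAt w
        ((1 / 2 : ℝ) • ((fderivInnerCLM ℝ (g y, g y)).comp ((A y).prod (A y)))) y := by
      have h3 := h1.const_mul (1 / 2 : ℝ)
      refine h3.congr_of_eventuallyEq ?_
      filter_upwards with t
      rw [hwdef]
      simp only [← hgdef, real_inner_self_eq_norm_sq]
    have h4 : fderiv ℝ w y = (InnerProductSpace.toDual ℝ (EuclideanSpace ℝ (Fin d))) (A y (g y)) := by
      rw [h2.fderiv]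
      ext v
      simp only [ContinuousLinearMap.coe_smul', Pi.smul_apply,
        ContinuousLinearMap.coe_comp', Function.comp_apply,
        ContinuousLinearMap.prod_apply, fderivInnerCLM_apply,
        InnerProductSpace.toDual_apply_apply, smul_eq_mul]
      have h5 : ⟪g y, (A y) v⟫_ℝ = ⟪(A y) (g y), v⟫_ℝ :=
        (real_inner_comm _ _).trans (hsy v (g y))
      rw [h5, hsy v (g y)]
      ring
    show (InnerProductSpace.toDual ℝ (EuclideanSpace ℝ (Fin d))).symm (fderiv ℝ w y) = A y (g y)
    rw [h4, LinearIsometryEquiv.symm_apply_apply]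
  -- derivative of gradient w at x
  have hGw : HasFDerivAt (fun y => A y (g y)) ((A x).comp (A x) + B.flip (g x)) x :=
    hB.clm_apply hgdiff.self_of_nhds
  have hwy' : gradient w =ᶠ[nhds x] fun y => A y (g y) := hwy
  have hfw : fderiv ℝ (gradient w) x = (A x).comp (A x) + B.flip (g x) := by
    rw [hwy'.fderiv_eq, hGw.fderiv]
  -- value of lap w
  have hlapw : lap w x = ∑ i, (⟪A x (A x (e i)), e i⟫ + ⟪B (e i) (g x), e i⟫) := by
    unfold lap
    rw [hfw]
    refine Finset.sum_congr rfl fun i _ => ?_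
    simp only [ContinuousLinearMap.add_apply, ContinuousLinearMap.coe_comp',
      Function.comp_apply, ContinuousLinearMap.flip_apply, inner_add_left, hedef]
  -- derivative of lap u
  set L : Fin d → ((EuclideanSpace ℝ (Fin d) →L[ℝ] EuclideanSpace ℝ (Fin d)) →L[ℝ] ℝ) :=
    fun i => (innerSL ℝ (e i)).comp
      (ContinuousLinearMap.apply ℝ (EuclideanSpace ℝ (Fin d)) (e i)) with hLdef
  have hlapu_fun : lap u = fun y => ∑ i, L i (A y) := by
    funext y
    unfold lap
    refine Finset.sum_congr rfl fun i _ => ?_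
    simp only [hLdef, ContinuousLinearMap.coe_comp', Function.comp_apply,
      ContinuousLinearMap.apply_apply, innerSL_apply_apply, ← hAdef, ← hgdef, ← hedef]
    exact (real_inner_comm _ _)
  have hlapu_deriv : HasFDerivAt (lap u) (∑ i, (L i).comp B) x := by
    rw [hlapu_fun]
    exact HasFDerivAt.fun_sum fun i _ => ((L i).hasFDerivAt.comp x hB)
  have hinner_lapu : ⟪gradient (lap u) x, g x⟫ = ∑ i, ⟪B (g x) (e i), e i⟫ := by
    rw [inner_gradient_cd, hlapu_deriv.fderiv]
    simp only [ContinuousLinearMap.coe_sum', Finset.sum_apply, ContinuousLinearMap.coe_comp',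
      Function.comp_apply, hLdef, ContinuousLinearMap.apply_apply, innerSL_apply_apply]
    exact Finset.sum_congr rfl fun i _ => real_inner_comm _ _
  -- put things together: the RHS equals ∑ ⟪A x (A x eᵢ), eᵢ⟫
  have hRHS : lap w x - ⟪gradient (lap u) x, g x⟫ = ∑ i, ‖A x (e i)‖ ^ 2 := by
    rw [hlapw, hinner_lapu, Finset.sum_add_distrib]
    have hcancel : ∑ i, ⟪B (e i) (g x), e i⟫ = ∑ i, ⟪B (g x) (e i), e i⟫ := by
      refine Finset.sum_congr rfl fun i _ => ?_
      rw [hBsymm]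
    rw [hcancel]
    ring_nf
    refine Finset.sum_congr rfl fun i _ => ?_
    rw [hAx_symm (A x (e i)) (e i), real_inner_self_eq_norm_sq]
  -- Cauchy–Schwarz steps
  have hlapu_val : lap u x = ∑ i, ⟪A x (e i), e i⟫ := rfl
  have hnorm_e : ∀ i, ‖e i‖ = 1 := by
    intro i
    rw [hedef]
    rw [EuclideanSpace.norm_single]
    norm_num
  have step1 : (lap u x) ^ 2 ≤ (d : ℝ) * ∑ i, ⟪A x (e i), e i⟫ ^ 2 := by
    rw [hlapu_val]
    have := sq_sum_le_card_mul_sum_sq (s := (Finset.univ : Finset (Fin d)))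
      (f := fun i => ⟪A x (e i), e i⟫)
    simpa using this
  have step2 : ∀ i, ⟪A x (e i), e i⟫ ^ 2 ≤ ‖A x (e i)‖ ^ 2 := by
    intro i
    have h := abs_real_inner_le_norm (A x (e i)) (e i)
    rw [hnorm_e i, mul_one] at h
    calc ⟪A x (e i), e i⟫ ^ 2 = |⟪A x (e i), e i⟫| ^ 2 := (sq_abs _).symm
      _ ≤ ‖A x (e i)‖ ^ 2 := by
          exact pow_le_pow_left₀ (abs_nonneg _) h 2
  have hdpos : (0 : ℝ) < d := by exact_mod_cast hd
  rw [hRHS]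
  rw [div_mul_eq_mul_div, one_mul, div_le_iff₀ hdpos]
  calc (lap u x) ^ 2 ≤ (d : ℝ) * ∑ i, ⟪A x (e i), e i⟫ ^ 2 := step1
    _ ≤ (d : ℝ) * ∑ i, ‖A x (e i)‖ ^ 2 := by
        refine mul_le_mul_of_nonneg_left (Finset.sum_le_sum fun i _ => step2 i) hdpos.le
    _ = (∑ i, ‖A x (e i)‖ ^ 2) * d := by ring
end

section
/- Weighted Hessian inequality for the weight h(t) = (2/(1+δ))(1+t)^{(1+δ)/2}: Let d ≥ 1, δ ∈ (0,1), let A : Matrix (Fin d) (Fin d) ℝ be any real d × d matrix, and let v ∈ EuclideanSpace ℝ (Fin d). Set w := ‖v‖²/2. Then (1+w)^{(δ−1)/2} · (Σᵢ Σⱼ (A i j)²) + ((δ−1)/2)·(1+w)^{(δ−3)/2} · ‖A.mulVec v‖² ≥ δ · (1+w)^{(δ−1)/2} · (Σᵢ Σⱼ (A i j)²). (Here (1+w)^{(δ−1)/2} = h'(w) and ((δ−1)/2)(1+w)^{(δ−3)/2} = h''(w).) -/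
/-- **Weighted Hessian inequality** for the weight `h(t) = (2/(1+δ))(1+t)^((1+δ)/2)`, whose
derivatives are `h'(t) = (1+t)^((δ−1)/2)` and `h''(t) = ((δ−1)/2)(1+t)^((δ−3)/2)`. For any real
`d × d` matrix `A`, any vector `v`, and `w := ‖v‖²/2`:
`h'(w)·(Σᵢⱼ (A i j)²) + h''(w)·‖A v‖² ≥ δ·h'(w)·(Σᵢⱼ (A i j)²)`. -/
theorem weighted_hessian_inequality {d : ℕ} (hd : 1 ≤ d) (δ : ℝ)
    (hδ0 : 0 < δ) (hδ1 : δ < 1)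
    (A : Matrix (Fin d) (Fin d) ℝ) (v : EuclideanSpace ℝ (Fin d)) :
    δ * (1 + ‖v‖ ^ 2 / 2) ^ ((δ - 1) / 2) * (∑ i, ∑ j, (A i j) ^ 2) ≤
      (1 + ‖v‖ ^ 2 / 2) ^ ((δ - 1) / 2) * (∑ i, ∑ j, (A i j) ^ 2)
        + ((δ - 1) / 2) * (1 + ‖v‖ ^ 2 / 2) ^ ((δ - 3) / 2) *
          ‖(WithLp.equiv 2 (Fin d → ℝ)).symm (A.mulVec ((WithLp.equiv 2 (Fin d → ℝ)) v))‖ ^ 2 := by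
  set S : ℝ := ∑ i, ∑ j, (A i j) ^ 2 with hS
  set N : ℝ := ‖(WithLp.equiv 2 (Fin d → ℝ)).symm (A.mulVec ((WithLp.equiv 2 (Fin d → ℝ)) v))‖ ^ 2
  have hv2 : ‖v‖ ^ 2 = ∑ i, (v i) ^ 2 := by
    rw [EuclideanSpace.norm_eq, Real.sq_sqrt (by positivity)]
    simp [sq_abs]
  have hN : N = ∑ i, (A.mulVec (fun j => v j) i) ^ 2 := by
    simp only [N]
    rw [EuclideanSpace.norm_eq, Real.sq_sqrt (by positivity)]
    simp only [Equiv.refl_apply, Equiv.refl_symm, Real.norm_eq_abs, sq_abs]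
    rfl
  have hS0 : 0 ≤ S := by positivity
  have hN0 : 0 ≤ N := by positivity
  -- Cauchy-Schwarz: N ≤ S * ‖v‖²
  have hCS : N ≤ S * ‖v‖ ^ 2 := by
    rw [hN, hv2, hS, Finset.sum_mul]
    apply Finset.sum_le_sum
    intro i _
    calc (A.mulVec (fun j => v j) i) ^ 2 = (∑ j, A i j * v j) ^ 2 := by
          simp [Matrix.mulVec, dotProduct]
      _ ≤ (∑ j, (A i j) ^ 2) * (∑ j, (v j) ^ 2) :=
          Finset.sum_mul_sq_le_sq_mul_sq Finset.univ _ _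
  set w : ℝ := ‖v‖ ^ 2 / 2 with hw
  have hw0 : 0 ≤ w := by positivity
  have h1w : (0:ℝ) < 1 + w := by linarith
  have hkey : (1 - δ) / 2 * ((1 + w) ^ ((δ - 3) / 2) * N)
      ≤ (1 - δ) * ((1 + w) ^ ((δ - 1) / 2) * S) := by
    have hb0 : (0:ℝ) < (1 + w) ^ ((δ - 3) / 2) := Real.rpow_pos_of_pos h1w _
    have h1 : (1 + w) ^ ((δ - 3) / 2) * N ≤ (1 + w) ^ ((δ - 3) / 2) * (S * (2 * w)) := by
      apply mul_le_mul_of_nonneg_left _ hb0.le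
      calc N ≤ S * ‖v‖ ^ 2 := hCS
        _ = S * (2 * w) := by rw [hw]; ring
    have h2 : (1 + w) ^ ((δ - 3) / 2) * w ≤ (1 + w) ^ ((δ - 1) / 2) := by
      calc (1 + w) ^ ((δ - 3) / 2) * w ≤ (1 + w) ^ ((δ - 3) / 2) * (1 + w) :=
            mul_le_mul_of_nonneg_left (by linarith) hb0.le
        _ = (1 + w) ^ ((δ - 3) / 2 + 1) := by
            rw [Real.rpow_add_one h1w.ne']
        _ = (1 + w) ^ ((δ - 1) / 2) := by ring_nf
    have h3 : (1 + w) ^ ((δ - 3) / 2) * w * S ≤ (1 + w) ^ ((δ - 1) / 2) * S :=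
      mul_le_mul_of_nonneg_right h2 hS0
    nlinarith [hδ1, hδ0]
  nlinarith [hkey]
end
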